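/- arXiv:1909.10925 — 4 statements merged into one kernel-verified Lean document; each statement's English description precedes it below -/
import Mathlib

section
/- Let (x, p, λ) be a KKT point of the AMO Eisenberg-Gale program. Fix a buyer i and an item group k with λ_ik > 0, and suppose there is a buyer i' with |β_i − β_{i'}| ≤ ε_β and sum_{j∈k} x_{i'j} < 1 (so λ_{i'k} = 0 by complementary slackness). Let j_k ∈ k be an item with x_{i j_k} > 0 and |v_{i j_k} − v_{i' j_k}| ≤ ε_v. Then λ_{ik} ≤ ε_β · v_{i j_k} + β_{i'} · ε_v. -/
open Finset

/-! Buyer `i` buys `jk`, so stationarity is tight: `λ_ik = v_{i,jk} β_i - p_jk`. Buyer `i'` has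
`λ_{i'k} = 0`, so its stationarity inequality gives `p_jk ≥ v_{i',jk} β_{i'}`. Hence `λ_ik` is at
most `v_{i,jk} β_i - v_{i',jk} β_{i'} = v_{i,jk} (β_i - β_{i'}) + β_{i'} (v_{i,jk} - v_{i',jk})`. -/

lemma mul_sub_mul_le_of_abs_sub_le {a a' b b' εa εb : ℝ} (ha : 0 ≤ a) (hb' : 0 ≤ b')
    (hb : |b - b'| ≤ εb) (ha' : |a - a'| ≤ εa) :
    a * b - a' * b' ≤ εb * a + b' * εa :=
  calc a * b - a' * b' = a * (b - b') + b' * (a - a') := by ring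
    _ ≤ a * εb + b' * εa :=
      add_le_add (mul_le_mul_of_nonneg_left (le_of_abs_le hb) ha)
        (mul_le_mul_of_nonneg_left (le_of_abs_le ha') hb')
    _ = εb * a + b' * εa := by ring

theorem stmt2_general {N M Kn : ℕ} (v : Fin N → Fin M → ℝ)
    (x : Fin N → Fin M → ℝ) (p : Fin M → ℝ) (lam : Fin N → Fin Kn → ℝ)
    (g : Fin M → Fin Kn) (beta : Fin N → ℝ)
    (hv : ∀ i j, 0 < v i j)
    (hbpos : ∀ i, 0 < beta i)
    (hstat : ∀ i j, v i j * beta i ≤ p j + lam i (g j))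
    (heq : ∀ i j, 0 < x i j → v i j * beta i = p j + lam i (g j))
    (i i' : Fin N) (k : Fin Kn) (εβ εv : ℝ)
    (hclose : |beta i - beta i'| ≤ εβ)
    (hunconstrained : ∑ j ∈ Finset.univ.filter (fun j => g j = k), x i' j < 1)
    (hcs : lam i' k * (1 - ∑ j ∈ Finset.univ.filter (fun j => g j = k), x i' j) = 0)
    (jk : Fin M) (hjk : g jk = k) (hxjk : 0 < x i jk)
    (hvclose : |v i jk - v i' jk| ≤ εv) :
    lam i k ≤ εβ * v i jk + beta i' * εv := by
  have hlam' : lam i' k = 0 :=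
    (mul_eq_zero.1 hcs).resolve_right (sub_ne_zero.2 hunconstrained.ne')
  have htight : v i jk * beta i = p jk + lam i k := hjk ▸ heq i jk hxjk
  have hprice : v i' jk * beta i' ≤ p jk := by simpa [hjk, hlam'] using hstat i' jk
  calc lam i k ≤ v i jk * beta i - v i' jk * beta i' := by linarith
    _ ≤ εβ * v i jk + beta i' * εv :=
      mul_sub_mul_le_of_abs_sub_le (hv i jk).le (hbpos i').le hclose hvclose

/-- Approximate twins give bounded AMO (group-constraint) prices:
if `lam i k > 0`, buyer `i'` has close utility price, is unconstrained in
group `k`, and item `jk ∈ k` has `x i jk > 0` with close valuations, then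
`lam i k ≤ εβ * v i jk + β i' * εv`. -/
theorem stmt2 {N M Kn : ℕ} (B : Fin N → ℝ) (v : Fin N → Fin M → ℝ)
    (x : Fin N → Fin M → ℝ) (p : Fin M → ℝ) (lam : Fin N → Fin Kn → ℝ)
    (g : Fin M → Fin Kn) (beta : Fin N → ℝ)
    (hbeta : ∀ i, beta i = B i / ∑ j, v i j * x i j)
    (hB : ∀ i, 0 < B i) (hv : ∀ i j, 0 < v i j)
    (hbpos : ∀ i, 0 < beta i)
    (hx : ∀ i j, 0 ≤ x i j)
    (hp : ∀ j, 0 ≤ p j) (hlam : ∀ i k, 0 ≤ lam i k)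
    (hstat : ∀ i j, v i j * beta i ≤ p j + lam i (g j))
    (heq : ∀ i j, 0 < x i j → v i j * beta i = p j + lam i (g j))
    (i i' : Fin N) (k : Fin Kn) (εβ εv : ℝ)
    (hlik : 0 < lam i k)
    (hclose : |beta i - beta i'| ≤ εβ)
    (hunconstrained : ∑ j ∈ Finset.univ.filter (fun j => g j = k), x i' j < 1)
    (hcs : lam i' k * (1 - ∑ j ∈ Finset.univ.filter (fun j => g j = k), x i' j) = 0)
    (jk : Fin M) (hjk : g jk = k) (hxjk : 0 < x i jk)
    (hvclose : |v i jk - v i' jk| ≤ εv) :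
    lam i k ≤ εβ * v i jk + beta i' * εv :=
  stmt2_general v x p lam g beta hv hbpos hstat heq i i' k εβ εv hclose hunconstrained hcs jk hjk
    hxjk hvclose
end

section
/- Let (x, p, λ) be a KKT point of the constraint-group Eisenberg-Gale program, and suppose for buyer i that λ_{i k(j)} ≤ L for every item j with x_ij > 0 (where k(j) is j's group). Then the regret of buyer i under prices p is bounded: Ū_i(p) − v_i · x_i ≤ β_i^{-1} · L · sum_j x_ij, where β_i = B_i/(v_i · x_i) and Ū_i(p) is the demand utility of buyer i at prices p with budget B_i under the group constraints. -/
/-!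
Stationarity `v j * β ≤ p j + λ (g j)` gives `v · y ≤ β⁻¹ ((p + λ) · y)` for every bundle `y ≥ 0`.
An affordable, group-feasible `y` has `p · y ≤ B`, and since `λ_k > 0` only on groups that `x`
fills completely, `λ · y ≤ λ · x ≤ L ∑ x`. Finally `β⁻¹ B = v · x` by the definition of `β`.
-/

open Finset

section GroupConstraints

variable {ι κ : Type*} [Fintype ι] [Fintype κ] [DecidableEq κ]

theorem sum_comp_mul_eq_sum_mul_sum_fiber (lam : κ → ℝ) (g : ι → κ) (f : ι → ℝ) :
    ∑ j, lam (g j) * f j = ∑ k, lam k * ∑ j ∈ univ.filter (fun j => g j = k), f j := by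
  rw [← Finset.sum_fiberwise univ g]
  refine sum_congr rfl fun k _ => ?_
  rw [mul_sum]
  refine sum_congr rfl fun j hj => ?_
  rw [(mem_filter.mp hj).2]

theorem sum_multiplier_mul_le_of_saturated (lam : κ → ℝ) (g : ι → κ) (x y : ι → ℝ)
    (hlam : ∀ k, 0 ≤ lam k)
    (hcs : ∀ k, 0 < lam k → ∑ j ∈ univ.filter (fun j => g j = k), x j = 1)
    (hy : ∀ k, ∑ j ∈ univ.filter (fun j => g j = k), y j ≤ 1) :
    ∑ j, lam (g j) * y j ≤ ∑ j, lam (g j) * x j := by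
  rw [sum_comp_mul_eq_sum_mul_sum_fiber lam g y, sum_comp_mul_eq_sum_mul_sum_fiber lam g x]
  refine Finset.sum_le_sum fun k _ => ?_
  rcases (hlam k).eq_or_lt with h | h
  · simp [← h]
  · rw [hcs k h]
    exact mul_le_mul_of_nonneg_left (hy k) (hlam k)

end GroupConstraints

theorem sum_mul_le_mul_sum_of_le_on_support {ι : Type*} (s : Finset ι) (c x : ι → ℝ) (L : ℝ)
    (hx : ∀ j ∈ s, 0 ≤ x j) (hc : ∀ j ∈ s, 0 < x j → c j ≤ L) :
    ∑ j ∈ s, c j * x j ≤ L * ∑ j ∈ s, x j := by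
  rw [mul_sum]
  refine sum_le_sum fun j hj => ?_
  rcases (hx j hj).eq_or_lt with h | h
  · simp [← h]
  · exact mul_le_mul_of_nonneg_right (hc j hj h) (hx j hj)

theorem sum_mul_le_inv_mul_sum_of_mul_le {ι : Type*} (s : Finset ι) (v q y : ι → ℝ) {β : ℝ}
    (hβ : 0 < β) (hvq : ∀ j ∈ s, v j * β ≤ q j) (hy : ∀ j ∈ s, 0 ≤ y j) :
    ∑ j ∈ s, v j * y j ≤ β⁻¹ * ∑ j ∈ s, q j * y j := by
  rw [mul_sum]
  refine sum_le_sum fun j hj => ?_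
  rw [le_inv_mul_iff₀ hβ, ← mul_assoc, mul_comm β]
  exact mul_le_mul_of_nonneg_right (hvq j hj) (hy j hj)

theorem stmt13_general {M Kn : ℕ} (B : ℝ) (v x p : Fin M → ℝ)
    (lam : Fin Kn → ℝ) (g : Fin M → Fin Kn) (beta L : ℝ)
    (hB : 0 < B) (hx : ∀ j, 0 ≤ x j)
    (hlam : ∀ k, 0 ≤ lam k)
    (hu : 0 < ∑ j, v j * x j)
    (hbeta : beta = B / ∑ j, v j * x j)
    (hstat : ∀ j, v j * beta ≤ p j + lam (g j))
    (hcs : ∀ k, 0 < lam k →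
      ∑ j ∈ Finset.univ.filter (fun j => g j = k), x j = 1)
    (hL : ∀ j, 0 < x j → lam (g j) ≤ L) :
    ∀ y : Fin M → ℝ, (∀ j, 0 ≤ y j) →
      (∀ k, ∑ j ∈ Finset.univ.filter (fun j => g j = k), y j ≤ 1) →
      ∑ j, p j * y j ≤ B →
      ∑ j, v j * y j - ∑ j, v j * x j ≤ beta⁻¹ * L * ∑ j, x j := by
  intro y hy hgy hby
  have hβ : 0 < beta := hbeta ▸ div_pos hB hu
  have hvalue := sum_mul_le_inv_mul_sum_of_mul_le univ v _ y hβ (fun j _ => hstat j)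
    fun j _ => hy j
  have hcost : ∑ j, (p j + lam (g j)) * y j ≤ B + L * ∑ j, x j := by
    simp only [add_mul, sum_add_distrib]
    have := sum_multiplier_mul_le_of_saturated lam g x y hlam hcs hgy
    have := sum_mul_le_mul_sum_of_le_on_support univ (fun j => lam (g j)) x L
      (fun j _ => hx j) fun j _ => hL j
    linarith
  have hBx : beta⁻¹ * B = ∑ j, v j * x j := by
    rw [hbeta, inv_div, div_mul_cancel₀ _ hB.ne']
  calc ∑ j, v j * y j - ∑ j, v j * x j
      ≤ beta⁻¹ * (B + L * ∑ j, x j) - ∑ j, v j * x j := by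
        gcongr
        exact hvalue.trans (mul_le_mul_of_nonneg_left hcost (inv_nonneg.mpr hβ.le))
    _ = beta⁻¹ * L * ∑ j, x j := by rw [mul_add, hBx]; ring

/-- Regret bound for a buyer at a KKT point of the constraint-group
Eisenberg-Gale program: if `lam (g j) ≤ L` for every purchased item `j`, then
the buyer's regret under prices `p` (over all feasible affordable bundles `y`)
is at most `β⁻¹ * L * ∑ j, x j`. -/
theorem stmt13 {M Kn : ℕ} (B : ℝ) (v x p : Fin M → ℝ)
    (lam : Fin Kn → ℝ) (g : Fin M → Fin Kn) (beta L : ℝ)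
    (hB : 0 < B) (hv : ∀ j, 0 < v j) (hx : ∀ j, 0 ≤ x j)
    (hp : ∀ j, 0 ≤ p j) (hlam : ∀ k, 0 ≤ lam k)
    (hu : 0 < ∑ j, v j * x j)
    (hbeta : beta = B / ∑ j, v j * x j)
    (hstat : ∀ j, v j * beta ≤ p j + lam (g j))
    (heq : ∀ j, 0 < x j → v j * beta = p j + lam (g j))
    (hbudget : ∑ j, x j * (p j + lam (g j)) = B)
    (hgroup : ∀ k, ∑ j ∈ Finset.univ.filter (fun j => g j = k), x j ≤ 1)
    (hcs : ∀ k, 0 < lam k →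
      ∑ j ∈ Finset.univ.filter (fun j => g j = k), x j = 1)
    (hL : ∀ j, 0 < x j → lam (g j) ≤ L) :
    ∀ y : Fin M → ℝ, (∀ j, 0 ≤ y j) →
      (∀ k, ∑ j ∈ Finset.univ.filter (fun j => g j = k), y j ≤ 1) →
      ∑ j, p j * y j ≤ B →
      ∑ j, v j * y j - ∑ j, v j * x j ≤ beta⁻¹ * L * ∑ j, x j :=
  stmt13_general B v x p lam g beta L hB hx hlam hu hbeta hstat hcs hL
end

section
/- In the 2-buyer, 2-item AMO market where item 1 has supply 2, item 2 has supply 1, both buyers value item 1 at 1, buyer 1 values item 2 at 1, and buyer 2 values item 2 at 100, the AMO max-Nash-welfare solution (maximizing log(x_{11} + x_{12}) + log(x_{21} + 100 x_{22}) subject to x_{11} + x_{21} ≤ 2, x_{12} + x_{22} ≤ 1, 0 ≤ x_ij ≤ 1) gives x_{11} = x_{21} = 1 and allocates strictly more of item 2 to buyer 2 than to buyer 1 (x_{22} > x_{12}), and hence buyer 1 envies buyer 2: v_1 · x_2 > v_1 · x_1. -/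
/-!
Since the utilities are positive, maximising the sum of logs is maximising the Nash product
`(x₀₀ + x₀₁)(x₁₀ + 100 x₁₁)`. Raising `x₀₀`, `x₁₀` to `1` and `x₀₁` to `1 - x₁₁` only increases
it, and `(2 - d)(1 + 100 d) = 40401/400 - 100 (d - 199/200)²`, so the product has the unique
maximiser `x₀₀ = x₁₀ = 1`, `x₀₁ = 1/200`, `x₁₁ = 199/200`.
-/

open Real

theorem log_add_log_le_log_add_log_iff {p q r s : ℝ} (hp : 0 < p) (hq : 0 < q) (hr : 0 < r)
    (hs : 0 < s) : log p + log q ≤ log r + log s ↔ p * q ≤ r * s := by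
  rw [← log_mul hp.ne' hq.ne', ← log_mul hr.ne' hs.ne',
    log_le_log_iff (by positivity) (by positivity)]

section NashProduct

variable {a b c d : ℝ}

theorem nashProduct_le (ha : a ≤ 1) (hb : 0 ≤ b) (hc : c ≤ 1) (hd : 0 ≤ d) (hbd : b + d ≤ 1)
    (hcd : 0 < c + 100 * d) :
    (a + b) * (c + 100 * d) ≤ 40401 / 400 - 100 * (d - 199 / 200) ^ 2 :=
  calc (a + b) * (c + 100 * d) ≤ (1 + b) * (c + 100 * d) := by gcongr
    _ ≤ (1 + b) * (1 + 100 * d) := by gcongr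
    _ ≤ (2 - d) * (1 + 100 * d) := by gcongr; linarith
    _ = 40401 / 400 - 100 * (d - 199 / 200) ^ 2 := by ring

theorem eq_of_le_nashProduct (ha : a ≤ 1) (hb : 0 ≤ b) (hc : c ≤ 1) (hd : 0 ≤ d)
    (hbd : b + d ≤ 1) (hcd : 0 < c + 100 * d) (hmax : 40401 / 400 ≤ (a + b) * (c + 100 * d)) :
    a = 1 ∧ b = 1 / 200 ∧ c = 1 ∧ d = 199 / 200 := by
  have hd' : d = 199 / 200 := by
    have hsq : (d - 199 / 200) ^ 2 = 0 := by
      nlinarith [nashProduct_le ha hb hc hd hbd hcd, sq_nonneg (d - 199 / 200)]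
    linarith [pow_eq_zero_iff (n := 2) two_ne_zero |>.mp hsq]
  subst hd'
  have hb' : b = 1 / 200 := by nlinarith
  subst hb'
  have hc' : c = 1 := by nlinarith
  exact ⟨by nlinarith, rfl, hc', rfl⟩

end NashProduct

theorem stmt15_general (x : Fin 2 → Fin 2 → ℝ)
    (hbox : ∀ i j, 0 ≤ x i j ∧ x i j ≤ 1)
    (hs2 : x 0 1 + x 1 1 ≤ 1)
    (hu1 : 0 < x 0 0 + x 0 1) (hu2 : 0 < x 1 0 + 100 * x 1 1)
    (hopt : ∀ y : Fin 2 → Fin 2 → ℝ,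
      (∀ i j, 0 ≤ y i j ∧ y i j ≤ 1) →
      y 0 0 + y 1 0 ≤ 2 → y 0 1 + y 1 1 ≤ 1 →
      0 < y 0 0 + y 0 1 → 0 < y 1 0 + 100 * y 1 1 →
      Real.log (y 0 0 + y 0 1) + Real.log (y 1 0 + 100 * y 1 1)
        ≤ Real.log (x 0 0 + x 0 1) + Real.log (x 1 0 + 100 * x 1 1)) :
    x 0 0 = 1 ∧ x 1 0 = 1 ∧ x 0 1 < x 1 1 ∧
      x 0 0 + x 0 1 < x 1 0 + x 1 1 := by
  -- the unique maximiser of the Nash product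
  have hlog := hopt ![![1, 1 / 200], ![1, 199 / 200]]
    (by intro i j; fin_cases i <;> fin_cases j <;> norm_num)
    (by norm_num) (by norm_num) (by norm_num) (by norm_num)
  simp only [Matrix.cons_val_zero, Matrix.cons_val_one] at hlog
  have hmax : 40401 / 400 ≤ (x 0 0 + x 0 1) * (x 1 0 + 100 * x 1 1) := by
    have := (log_add_log_le_log_add_log_iff (by norm_num) (by norm_num) hu1 hu2).mp hlog
    linarith
  obtain ⟨h00, h01, h10, h11⟩ := eq_of_le_nashProduct (hbox 0 0).2 (hbox 0 1).1 (hbox 1 0).2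
    (hbox 1 1).1 hs2 hu2 hmax
  refine ⟨h00, h10, ?_, ?_⟩ <;> norm_num [h00, h01, h10, h11]

/-- In the 2-buyer, 2-item AMO market (supplies 2 and 1; buyer 1 values the
items at (1,1), buyer 2 at (1,100)), the AMO max-Nash-welfare solution gives
each buyer a full unit of item 1, gives strictly more of item 2 to buyer 2,
and hence buyer 1 envies buyer 2. -/
theorem stmt15 (x : Fin 2 → Fin 2 → ℝ)
    (hbox : ∀ i j, 0 ≤ x i j ∧ x i j ≤ 1)
    (hs1 : x 0 0 + x 1 0 ≤ 2) (hs2 : x 0 1 + x 1 1 ≤ 1)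
    (hu1 : 0 < x 0 0 + x 0 1) (hu2 : 0 < x 1 0 + 100 * x 1 1)
    (hopt : ∀ y : Fin 2 → Fin 2 → ℝ,
      (∀ i j, 0 ≤ y i j ∧ y i j ≤ 1) →
      y 0 0 + y 1 0 ≤ 2 → y 0 1 + y 1 1 ≤ 1 →
      0 < y 0 0 + y 0 1 → 0 < y 1 0 + 100 * y 1 1 →
      Real.log (y 0 0 + y 0 1) + Real.log (y 1 0 + 100 * y 1 1)
        ≤ Real.log (x 0 0 + x 0 1) + Real.log (x 1 0 + 100 * x 1 1)) :
    x 0 0 = 1 ∧ x 1 0 = 1 ∧ x 0 1 < x 1 1 ∧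
      x 0 0 + x 0 1 < x 1 0 + x 1 1 :=
  stmt15_general x hbox hs2 hu1 hu2 hopt
end

section
/- For the standard Eisenberg-Gale program with linear utilities and divisible goods, if x* is an optimal solution with supply-constraint Lagrange multipliers p*, then (x*, p*) is a market equilibrium: every buyer's allocation x*_i maximizes v_i · x_i subject to p* · x_i ≤ B_i, and every item with positive price has its supply fully allocated (sum_i x*_ij = s_j whenever p*_j > 0). -/
/-!
Maximising the Lagrangian over allocations splits into one problem per buyer: `x i` maximises
`B i * log (v i ⬝ y) - p ⬝ y` over bundles `y ≥ 0`. Along the ray `t • x i` the first-order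
condition at `t = 1` says that buyer `i` spends exactly `B i`; comparing `x i` with an affordable
bundle `y` then gives `B i * log (v i ⬝ y / v i ⬝ x i) ≤ p ⬝ y - B i ≤ 0`. Minimality of the
Lagrangian in the multipliers, tested at `q = 0`, says that `∑ j, p j * (∑ i, x i j - s j) ≥ 0`,
a sum of nonpositive terms, whence complementary slackness.
-/

open Finset

section EisenbergGale

variable {ι κ : Type*} [Fintype ι] [Fintype κ]

noncomputable def egLagrangian (B : ι → ℝ) (v : ι → κ → ℝ) (s : κ → ℝ) (y : ι → κ → ℝ)
    (q : κ → ℝ) : ℝ :=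
  ∑ i, B i * Real.log (∑ j, v i j * y i j) - ∑ j, q j * ((∑ i, y i j) - s j)

noncomputable def buyerPayoff (B : ℝ) (v q z : κ → ℝ) : ℝ :=
  B * Real.log (∑ j, v j * z j) - ∑ j, q j * z j

theorem egLagrangian_eq_sum_buyerPayoff (B : ι → ℝ) (v : ι → κ → ℝ) (s : κ → ℝ)
    (y : ι → κ → ℝ) (q : κ → ℝ) :
    egLagrangian B v s y q = ∑ i, buyerPayoff (B i) (v i) q (y i) + ∑ j, q j * s j := by
  simp only [egLagrangian, buyerPayoff, sum_sub_distrib, mul_sub, mul_sum]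
  rw [sum_comm (f := fun i j => q j * y i j)]
  ring

theorem apply_le_of_sum_update_le {α : Type*} [DecidableEq ι] (F : ι → α → ℝ) (x : ι → α)
    (i : ι) (a : α) (h : ∑ k, F k (Function.update x i a k) ≤ ∑ k, F k (x k)) :
    F i a ≤ F i (x i) := by
  simp only [Function.apply_update F, sum_update_of_mem (mem_univ i)] at h
  rwa [sum_eq_add_sum_sdiff_singleton_of_mem (mem_univ i), add_le_add_iff_right] at h

theorem buyerPayoff_le_of_egLagrangian_le {B : ι → ℝ} {v : ι → κ → ℝ} {s : κ → ℝ}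
    {x : ι → κ → ℝ} {q : κ → ℝ} (hx : ∀ i j, 0 ≤ x i j) (hu : ∀ i, 0 < ∑ j, v i j * x i j)
    (hmax : ∀ y : ι → κ → ℝ, (∀ i j, 0 ≤ y i j) → (∀ i, 0 < ∑ j, v i j * y i j) →
      egLagrangian B v s y q ≤ egLagrangian B v s x q)
    (i : ι) (z : κ → ℝ) (hz : ∀ j, 0 ≤ z j) (hzu : 0 < ∑ j, v i j * z j) :
    buyerPayoff (B i) (v i) q z ≤ buyerPayoff (B i) (v i) q (x i) := by
  classical
  have h := hmax (Function.update x i z)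
    ((Function.forall_update_iff x fun i' y => ∀ j, 0 ≤ y j).2 ⟨hz, fun i' _ => hx i'⟩)
    ((Function.forall_update_iff x fun i' y => 0 < ∑ j, v i' j * y j).2 ⟨hzu, fun i' _ => hu i'⟩)
  simp only [egLagrangian_eq_sum_buyerPayoff, add_le_add_iff_right] at h
  exact apply_le_of_sum_update_le (fun k => buyerPayoff (B k) (v k) q) x i z h

theorem eq_of_isMaxOn_mul_log_sub_mul (B c : ℝ)
    (h : IsMaxOn (fun t => B * Real.log t - t * c) (Set.Ioi 0) 1) : c = B := by
  have hderiv : HasDerivAt (fun t => B * Real.log t - t * c) (B * 1⁻¹ - 1 * c) 1 :=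
    ((Real.hasDerivAt_log one_ne_zero).const_mul B).sub ((hasDerivAt_id 1).mul_const c)
  have := (h.isLocalMax (Ioi_mem_nhds one_pos)).hasDerivAt_eq_zero hderiv
  linarith

theorem buyerPayoff_smul {B : ℝ} {v q z : κ → ℝ} (hzu : 0 < ∑ j, v j * z j) {t : ℝ} (ht : 0 < t) :
    buyerPayoff B v q (t • z) =
      B * Real.log t - t * ∑ j, q j * z j + B * Real.log (∑ j, v j * z j) := by
  simp only [buyerPayoff, Pi.smul_apply, smul_eq_mul, mul_left_comm _ t, ← mul_sum,
    Real.log_mul ht.ne' hzu.ne']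
  ring

theorem sum_mul_eq_of_buyerPayoff_le {B : ℝ} {v q z : κ → ℝ} (hz : ∀ j, 0 ≤ z j)
    (hzu : 0 < ∑ j, v j * z j)
    (hmax : ∀ y : κ → ℝ, (∀ j, 0 ≤ y j) → 0 < ∑ j, v j * y j →
      buyerPayoff B v q y ≤ buyerPayoff B v q z) :
    ∑ j, q j * z j = B := by
  refine eq_of_isMaxOn_mul_log_sub_mul B _ fun t (ht : 0 < t) => ?_
  have h := hmax (t • z) (fun j => smul_nonneg ht.le (hz j))
    (by simpa [mul_left_comm _ t, ← mul_sum] using mul_pos ht hzu)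
  rw [buyerPayoff_smul hzu ht, buyerPayoff] at h
  change _ ≤ B * Real.log 1 - 1 * _
  rw [Real.log_one]
  linarith

theorem utility_le_of_buyerPayoff_le {B : ℝ} {v q z : κ → ℝ} (hB : 0 < B) (hz : ∀ j, 0 ≤ z j)
    (hzu : 0 < ∑ j, v j * z j)
    (hmax : ∀ y : κ → ℝ, (∀ j, 0 ≤ y j) → 0 < ∑ j, v j * y j →
      buyerPayoff B v q y ≤ buyerPayoff B v q z)
    (y : κ → ℝ) (hy : ∀ j, 0 ≤ y j) (hbudget : ∑ j, q j * y j ≤ B) :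
    ∑ j, v j * y j ≤ ∑ j, v j * z j := by
  rcases le_or_gt (∑ j, v j * y j) 0 with hyu | hyu
  · exact hyu.trans hzu.le
  have hspent := sum_mul_eq_of_buyerPayoff_le hz hzu hmax
  have h := hmax y hy hyu
  simp only [buyerPayoff, hspent] at h
  have hlog : B * Real.log (∑ j, v j * y j) ≤ B * Real.log (∑ j, v j * z j) := by linarith
  exact (Real.log_le_log_iff hyu hzu).1 (le_of_mul_le_mul_left hlog hB)

theorem eq_of_sum_mul_sub_nonneg {p a b : κ → ℝ} (hp : ∀ j, 0 ≤ p j) (hab : ∀ j, a j ≤ b j)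
    (h : 0 ≤ ∑ j, p j * (a j - b j)) (j : κ) (hpj : 0 < p j) : a j = b j := by
  have hterm : ∀ k ∈ univ, p k * (a k - b k) ≤ 0 :=
    fun k _ => mul_nonpos_of_nonneg_of_nonpos (hp k) (sub_nonpos.2 (hab k))
  have hj := (sum_eq_zero_iff_of_nonpos hterm).1 (le_antisymm (sum_nonpos hterm) h) j (mem_univ j)
  linarith [(mul_eq_zero.1 hj).resolve_left hpj.ne']

end EisenbergGale

theorem stmt16_general {N M : ℕ} (B : Fin N → ℝ) (v : Fin N → Fin M → ℝ)
    (s : Fin M → ℝ) (x : Fin N → Fin M → ℝ) (p : Fin M → ℝ)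
    (hB : ∀ i, 0 < B i)
    (hx : ∀ i j, 0 ≤ x i j) (hfeas : ∀ j, ∑ i, x i j ≤ s j)
    (hu : ∀ i, 0 < ∑ j, v i j * x i j)
    (hp : ∀ j, 0 ≤ p j)
    (hsaddle1 : ∀ y : Fin N → Fin M → ℝ, (∀ i j, 0 ≤ y i j) →
      (∀ i, 0 < ∑ j, v i j * y i j) →
      ∑ i, B i * Real.log (∑ j, v i j * y i j)
          - ∑ j, p j * ((∑ i, y i j) - s j)
        ≤ ∑ i, B i * Real.log (∑ j, v i j * x i j)
          - ∑ j, p j * ((∑ i, x i j) - s j))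
    (hsaddle2 : ∀ q : Fin M → ℝ, (∀ j, 0 ≤ q j) →
      ∑ i, B i * Real.log (∑ j, v i j * x i j)
          - ∑ j, p j * ((∑ i, x i j) - s j)
        ≤ ∑ i, B i * Real.log (∑ j, v i j * x i j)
          - ∑ j, q j * ((∑ i, x i j) - s j)) :
    (∀ i, ∀ y : Fin M → ℝ, (∀ j, 0 ≤ y j) → ∑ j, p j * y j ≤ B i →
      ∑ j, v i j * y j ≤ ∑ j, v i j * x i j) ∧
    (∀ j, 0 < p j → ∑ i, x i j = s j) := by
  refine ⟨fun i => utility_le_of_buyerPayoff_le (hB i) (hx i) (hu i)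
    (buyerPayoff_le_of_egLagrangian_le (s := s) hx hu hsaddle1 i), ?_⟩
  have hslack := hsaddle2 0 fun _ => le_rfl
  simp only [Pi.zero_apply, zero_mul, sum_const_zero, sub_zero, sub_le_self_iff] at hslack
  exact eq_of_sum_mul_sub_nonneg hp hfeas hslack

/-- Classical Eisenberg-Gale equivalence: if `x` is optimal for the EG program
with supply-constraint Lagrange multipliers `p` (formalized as a saddle point
of the Lagrangian), then `(x, p)` is a market equilibrium: every buyer's
allocation maximizes their utility among affordable bundles, and every item
with positive price is fully allocated. -/
theorem stmt16 {N M : ℕ} (B : Fin N → ℝ) (v : Fin N → Fin M → ℝ)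
    (s : Fin M → ℝ) (x : Fin N → Fin M → ℝ) (p : Fin M → ℝ)
    (hB : ∀ i, 0 < B i) (hv : ∀ i j, 0 < v i j) (hs : ∀ j, 0 < s j)
    (hx : ∀ i j, 0 ≤ x i j) (hfeas : ∀ j, ∑ i, x i j ≤ s j)
    (hu : ∀ i, 0 < ∑ j, v i j * x i j)
    (hp : ∀ j, 0 ≤ p j)
    (hsaddle1 : ∀ y : Fin N → Fin M → ℝ, (∀ i j, 0 ≤ y i j) →
      (∀ i, 0 < ∑ j, v i j * y i j) →
      ∑ i, B i * Real.log (∑ j, v i j * y i j)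
          - ∑ j, p j * ((∑ i, y i j) - s j)
        ≤ ∑ i, B i * Real.log (∑ j, v i j * x i j)
          - ∑ j, p j * ((∑ i, x i j) - s j))
    (hsaddle2 : ∀ q : Fin M → ℝ, (∀ j, 0 ≤ q j) →
      ∑ i, B i * Real.log (∑ j, v i j * x i j)
          - ∑ j, p j * ((∑ i, x i j) - s j)
        ≤ ∑ i, B i * Real.log (∑ j, v i j * x i j)
          - ∑ j, q j * ((∑ i, x i j) - s j)) :
    (∀ i, ∀ y : Fin M → ℝ, (∀ j, 0 ≤ y j) → ∑ j, p j * y j ≤ B i →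
      ∑ j, v i j * y j ≤ ∑ j, v i j * x i j) ∧
    (∀ j, 0 < p j → ∑ i, x i j = s j) :=
  stmt16_general B v s x p hB hx hfeas hu hp hsaddle1 hsaddle2
end
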